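/- arXiv:1709.06349 — 2 statements merged into one kernel-verified Lean document; each statement's English description precedes it below -/
import Mathlib

section
/- Let G = (V,E) be a bi-coloured multigraph which is (2,2)-tight and let H be a proper subgraph of G with f(H) = 2. If there is no vertex u in V(G) \ V(H) and two vertices a, b in V(H) with edges (au,c), (bu,c) in E of the same colour c, then the contraction G/H is a bi-coloured multigraph (with simple monochrome subgraphs) which is (2,2)-tight. -/
open scoped BigOperators

noncomputable section

/-- The two edge colours: `b` (blue) and `r` (red). -/
inductive Col : Type
  | b : Col
  | r : Col
  deriving DecidableEq

/-- A bi-coloured multigraph on a finite vertex set: each colour class is a set of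
unordered pairs of distinct vertices (so each monochrome subgraph is a simple graph). -/
structure BiGraph (α : Type) [DecidableEq α] : Type where
  verts : Finset α
  edges : Col → Finset (Sym2 α)
  valid : ∀ c, ∀ e ∈ edges c, ¬ e.IsDiag ∧ ∀ x ∈ e, x ∈ verts

namespace BiGraph

variable {α : Type} [DecidableEq α]

/-- The number of edges (blue and red edges counted separately). -/
def edgeCount (G : BiGraph α) : ℕ :=
  (G.edges Col.b).card + (G.edges Col.r).card

def IsSubgraph (H G : BiGraph α) : Prop :=
  H.verts ⊆ G.verts ∧ ∀ c, H.edges c ⊆ G.edges c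

def ProperSubgraph (H G : BiGraph α) : Prop :=
  H.IsSubgraph G ∧ (H.verts ≠ G.verts ∨ ∃ c, H.edges c ≠ G.edges c)

/-- `(2,k)`-sparsity: every subgraph with at least one edge satisfies `|E| ≤ 2|V| - k`. -/
def Sparse (G : BiGraph α) (k : ℤ) : Prop :=
  ∀ H : BiGraph α, H.IsSubgraph G → 0 < H.edgeCount →
    (H.edgeCount : ℤ) ≤ 2 * (H.verts.card : ℤ) - k

/-- `(2,k)`-tightness. -/
def Tight (G : BiGraph α) (k : ℤ) : Prop :=
  G.Sparse k ∧ (G.edgeCount : ℤ) = 2 * (G.verts.card : ℤ) - k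

/-- `f(G) = 2|V| - |E|`. -/
def fcount (G : BiGraph α) : ℤ :=
  2 * (G.verts.card : ℤ) - (G.edgeCount : ℤ)

/-- `(2,3)`-limited: every purely blue subgraph is `(2,3)`-sparse. -/
def Limited23 (G : BiGraph α) : Prop :=
  ∀ H : BiGraph α, H.IsSubgraph G → H.edges Col.r = ∅ → 0 < H.edgeCount →
    (H.edgeCount : ℤ) ≤ 2 * (H.verts.card : ℤ) - 3

/-- A `(2,3)`-circuit. -/
def IsCircuit23 (G : BiGraph α) : Prop :=
  (G.edgeCount : ℤ) = 2 * (G.verts.card : ℤ) - 2 ∧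
  ∀ H : BiGraph α, H.ProperSubgraph G → 0 < H.edgeCount →
    (H.edgeCount : ℤ) ≤ 2 * (H.verts.card : ℤ) - 3

/-- Delete the edge `e₀` of colour `c`. -/
def deleteEdge (G : BiGraph α) (c : Col) (e₀ : Sym2 α) : BiGraph α where
  verts := G.verts
  edges := fun d => if d = c then (G.edges d).erase e₀ else G.edges d
  valid := by
    intro d e he
    by_cases h : d = c
    · rw [if_pos h] at he
      exact G.valid d e (Finset.mem_of_mem_erase he)
    · rw [if_neg h] at he
      exact G.valid d e he

/-- The complete bi-coloured multigraph on a vertex set: one blue and one red edge on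
each pair of distinct vertices. -/
def complete (Vs : Finset α) : BiGraph α where
  verts := Vs
  edges := fun _ => Vs.sym2.filter (fun e => ¬ e.IsDiag)
  valid := by
    intro c e he
    rw [Finset.mem_filter] at he
    exact ⟨he.2, fun x hx => Finset.mem_sym2_iff.mp he.1 x hx⟩

/-- The degree of a vertex (edges of both colours counted). -/
def degree (G : BiGraph α) (v : α) : ℕ :=
  ((G.edges Col.b).filter (fun e => v ∈ e)).card +
    ((G.edges Col.r).filter (fun e => v ∈ e)).card

/-- `G` is a single vertex with no edges. -/
def IsK1 (G : BiGraph α) : Prop :=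
  (∃ v, G.verts = {v}) ∧ ∀ c, G.edges c = ∅

/-- `G` is a bi-coloured `K₄` (each pair of the four vertices joined by exactly one
edge) with at least 5 edges of the same colour. -/
def IsK4Base (G : BiGraph α) : Prop :=
  G.verts.card = 4 ∧
  G.edges Col.b ∪ G.edges Col.r = G.verts.sym2.filter (fun e => ¬ e.IsDiag) ∧
  Disjoint (G.edges Col.b) (G.edges Col.r) ∧
  (5 ≤ (G.edges Col.b).card ∨ 5 ≤ (G.edges Col.r).card)

/-- 0-extension: add a new vertex `v` of degree 2, either joined to two distinct
existing vertices by edges of arbitrary colours, or joined to a single existing vertex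
by one blue and one red edge. -/
def ZeroExt (G G' : BiGraph α) : Prop :=
  ∃ v, v ∉ G.verts ∧ G'.verts = insert v G.verts ∧
    ((∃ x y c₁ c₂, x ∈ G.verts ∧ y ∈ G.verts ∧ x ≠ y ∧
        ∀ d, G'.edges d = G.edges d ∪
          ((if d = c₁ then {s(x, v)} else ∅) ∪ (if d = c₂ then {s(y, v)} else ∅))) ∨
     (∃ x, x ∈ G.verts ∧ ∀ d, G'.edges d = insert s(x, v) (G.edges d)))

/-- 1-extension with explicit data: delete the edge `s(x,y)` of colour `c`, add a new
vertex `v` with replacement edges `(xv, c₂)`, `(yv, c₃)` and a third edge `(zv, c₄)`;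
`z` may equal `x` or `y` provided the resulting parallel edges at `v` have distinct
colours. The colour case is `c → {c₂, c₃}`. -/
def OneExtOn (G G' : BiGraph α) (c c₂ c₃ : Col) (x y z v : α) : Prop :=
  x ≠ y ∧ x ∈ G.verts ∧ y ∈ G.verts ∧ z ∈ G.verts ∧ v ∉ G.verts ∧
  s(x, y) ∈ G.edges c ∧
  ∃ c₄ : Col, (z = x → c₄ ≠ c₂) ∧ (z = y → c₄ ≠ c₃) ∧
    G'.verts = insert v G.verts ∧
    ∀ d, G'.edges d =
      ((if d = c then (G.edges d).erase s(x, y) else G.edges d)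
        ∪ (if d = c₂ then {s(x, v)} else ∅))
        ∪ ((if d = c₃ then {s(y, v)} else ∅)
        ∪ (if d = c₄ then {s(z, v)} else ∅))

def OneExt (G G' : BiGraph α) (c c₂ c₃ : Col) : Prop :=
  ∃ x y z v, OneExtOn G G' c c₂ c₃ x y z v

/-- Colour-restricted 1-extension: the deleted edge and both replacement edges have the
same colour, and the new vertex has three distinct neighbours. -/
def ColRes1Ext (G G' : BiGraph α) : Prop :=
  ∃ c x y z v, z ≠ x ∧ z ≠ y ∧ OneExtOn G G' c c c x y z v

/-- Colour-restricted vertex split on an edge of colour `c`: the vertex `v` is split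
into `v` and `w`, the chosen neighbour `x` (with `(xv,c) ∈ E`) becomes joined to both,
the edge `(vw, c)` is added, and every other edge at `v` goes to `v` or to `w`. -/
def ColResVSplitC (G G' : BiGraph α) (c : Col) : Prop :=
  ∃ (v w x : α) (T : Col → Finset (Sym2 α)),
    v ∈ G.verts ∧ w ∉ G.verts ∧ s(x, v) ∈ G.edges c ∧
    (∀ d, T d ⊆ (G.edges d).filter (fun e => v ∈ e)) ∧ s(x, v) ∉ T c ∧
    G'.verts = insert w G.verts ∧
    ∀ d, G'.edges d =
      ((G.edges d \ T d) ∪ (T d).image (Sym2.map (fun u => if u = v then w else u)))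
        ∪ (if d = c then {s(x, w), s(v, w)} else ∅)

def ColResVSplit (G G' : BiGraph α) : Prop :=
  ∃ c, ColResVSplitC G G' c

/-- Graph extension: `G` is obtained from `G₀` by deleting the vertex `v`, adding a
disjoint copy of `H` (with `f(H) = 2`), and replacing each edge `(xv, c)` of `G₀` by an
edge `(x, m c x)` of colour `c` with `m c x` a vertex of `H`. -/
def GraphExt (G₀ G H : BiGraph α) (v : α) : Prop :=
  v ∈ G₀.verts ∧ Disjoint H.verts G₀.verts ∧ H.fcount = 2 ∧
  G.verts = (G₀.verts.erase v) ∪ H.verts ∧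
  ∃ m : Col → α → α, (∀ d x, m d x ∈ H.verts) ∧
    ∀ d, G.edges d =
      (((G₀.edges d).filter (fun e => v ∉ e)) ∪ H.edges d) ∪
        (((G₀.verts.erase v).filter (fun x => s(x, v) ∈ G₀.edges d)).image
          (fun x => s(x, m d x)))

/-- `K₂ ⊔ K₂` substitution: in `G'` the vertices `x, y, z` carry the four edges
`(xy,b), (xy,r), (yz,b), (yz,r)` and `(xz,r)` is not an edge; `G` is obtained by
deleting the two blue edges, adding a new vertex `v` and the red edges
`(xz,r), (xv,r), (yv,r), (zv,r)`, so that `x, y, z, v` span a red `K₄`. -/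
def K2SubstOn (G' G : BiGraph α) (x y z v : α) : Prop :=
  x ≠ y ∧ y ≠ z ∧ x ≠ z ∧
  x ∈ G'.verts ∧ y ∈ G'.verts ∧ z ∈ G'.verts ∧ v ∉ G'.verts ∧
  s(x, y) ∈ G'.edges Col.b ∧ s(x, y) ∈ G'.edges Col.r ∧
  s(y, z) ∈ G'.edges Col.b ∧ s(y, z) ∈ G'.edges Col.r ∧
  s(x, z) ∉ G'.edges Col.r ∧
  G.verts = insert v G'.verts ∧
  G.edges Col.b = ((G'.edges Col.b).erase s(x, y)).erase s(y, z) ∧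
  G.edges Col.r =
    insert s(x, z) (insert s(x, v) (insert s(y, v) (insert s(z, v) (G'.edges Col.r))))

end BiGraph

/-!
Contracting `H` to `v₀` keeps every edge not induced by `V(H)`, and the colour condition makes
this injective on each colour class. By sparsity the induced subgraph `G[V(H)]` has exactly
`2|V(H)| - 2` edges, so the counts `|V|` and `|E|` both drop by the right amount. A subgraph `K`
of `G/H` that avoids `v₀` is already a subgraph of `G`; one that contains `v₀` lifts to
`G[V(H)]` plus the preimages of the edges of `K`, a subgraph of `G` with
`|V(K)| + |V(H)| - 1` vertices and `|E(K)| + 2|V(H)| - 2` edges, whose `(2,2)`-bound is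
exactly the one required of `K`.
-/

theorem Finset.card_filter_apply_mem_of_injOn {β γ : Type*} [DecidableEq γ] {s : Finset β}
    {t : Finset γ} {f : β → γ} (hf : Set.InjOn f s) (ht : t ⊆ s.image f) :
    (s.filter (fun a => f a ∈ t)).card = t.card := by
  rw [← Finset.card_image_of_injOn (hf.mono (Finset.coe_subset.2 (Finset.filter_subset _ _))),
    ← Finset.filter_image (p := (· ∈ t)), Finset.filter_mem_eq_inter, Finset.inter_eq_right.2 ht]

namespace BiGraph

variable {α : Type} [DecidableEq α]

theorem edgeCount_le_of_edges_subset {H K : BiGraph α} (h : ∀ c, H.edges c ⊆ K.edges c) :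
    H.edgeCount ≤ K.edgeCount :=
  Nat.add_le_add (Finset.card_le_card (h Col.b)) (Finset.card_le_card (h Col.r))

def inducedOn (G : BiGraph α) (S : Finset α) : BiGraph α where
  verts := S
  edges c := (G.edges c).filter (· ∈ S.sym2)
  valid c e he := ⟨(G.valid c e (Finset.mem_filter.1 he).1).1,
    Finset.mem_sym2_iff.1 (Finset.mem_filter.1 he).2⟩

theorem inducedOn_isSubgraph {G : BiGraph α} {S : Finset α} (hS : S ⊆ G.verts) :
    (G.inducedOn S).IsSubgraph G :=
  ⟨hS, fun _ => Finset.filter_subset _ _⟩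

theorem IsSubgraph.edges_subset_inducedOn {H G : BiGraph α} (h : H.IsSubgraph G) (c : Col) :
    H.edges c ⊆ (G.inducedOn H.verts).edges c :=
  fun e he => Finset.mem_filter.2 ⟨h.2 c he, Finset.mem_sym2_iff.2 (H.valid c e he).2⟩

theorem Sparse.edgeCount_inducedOn {G H : BiGraph α} {k : ℤ} (hG : G.Sparse k)
    (hH : H.IsSubgraph G) (hHk : (H.edgeCount : ℤ) = 2 * H.verts.card - k) :
    ((G.inducedOn H.verts).edgeCount : ℤ) = 2 * H.verts.card - k := by
  have hle := edgeCount_le_of_edges_subset hH.edges_subset_inducedOn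
  rcases Nat.eq_zero_or_pos (G.inducedOn H.verts).edgeCount with hzero | hpos
  · omega
  · have : ((G.inducedOn H.verts).edgeCount : ℤ) ≤ 2 * H.verts.card - k :=
      hG _ (inducedOn_isSubgraph hH.1) hpos
    omega

section Contraction

variable {S : Finset α} {v₀ : α}

def contractMap (S : Finset α) (v₀ : α) (u : α) : α := if u ∈ S then v₀ else u

theorem contractMap_eq_iff (hv₀ : v₀ ∈ S) {a b : α} :
    contractMap S v₀ a = contractMap S v₀ b ↔ a = b ∨ a ∈ S ∧ b ∈ S := by
  unfold contractMap
  split_ifs <;> aesop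

theorem contractMap_mem_insert_sdiff {V : Finset α} {u : α} (hu : u ∈ V) :
    contractMap S v₀ u ∈ insert v₀ (V \ S) := by
  unfold contractMap
  split_ifs with huS
  · exact Finset.mem_insert_self _ _
  · exact Finset.mem_insert_of_mem (Finset.mem_sdiff.2 ⟨hu, huS⟩)

def contract (G : BiGraph α) (S : Finset α) (v₀ : α) (hv₀ : v₀ ∈ S) : BiGraph α where
  verts := insert v₀ (G.verts \ S)
  edges c := ((G.edges c).filter (· ∉ S.sym2)).image (Sym2.map (contractMap S v₀))
  valid c e he := by
    obtain ⟨e, he', rfl⟩ := Finset.mem_image.1 he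
    obtain ⟨heG, heS⟩ := Finset.mem_filter.1 he'
    obtain ⟨hdiag, hverts⟩ := G.valid c e heG
    induction e using Sym2.ind with
    | _ x y =>
    rw [Sym2.map_mk, Sym2.mk_isDiag_iff, contractMap_eq_iff hv₀]
    refine ⟨fun h => h.elim hdiag (heS ∘ Finset.mk_mem_sym2_iff.2), fun z hz => ?_⟩
    rcases Sym2.mem_iff.1 hz with rfl | rfl
    · exact contractMap_mem_insert_sdiff (hverts x (Sym2.mem_mk_left x y))
    · exact contractMap_mem_insert_sdiff (hverts y (Sym2.mem_mk_right x y))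

def ContractsSimply (G : BiGraph α) (S : Finset α) : Prop :=
  ∀ ⦃u a b : α⦄ ⦃c : Col⦄, u ∉ S → a ∈ S → b ∈ S →
    s(a, u) ∈ G.edges c → s(b, u) ∈ G.edges c → a = b

variable {G : BiGraph α}

theorem ContractsSimply.eq_of_contractMap_eq (hG : G.ContractsSimply S) (hv₀ : v₀ ∈ S)
    {c : Col} {x₁ y₁ x₂ y₂ : α} (h₁ : s(x₁, y₁) ∈ G.edges c) (h₂ : s(x₂, y₂) ∈ G.edges c)
    (hn₁ : ¬(x₁ ∈ S ∧ y₁ ∈ S)) (hx : contractMap S v₀ x₁ = contractMap S v₀ x₂)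
    (hy : contractMap S v₀ y₁ = contractMap S v₀ y₂) :
    s(x₁, y₁) = s(x₂, y₂) := by
  rw [contractMap_eq_iff hv₀] at hx hy
  rcases hx with rfl | ⟨hx₁, hx₂⟩ <;> rcases hy with rfl | ⟨hy₁, hy₂⟩
  · rfl
  · rw [Sym2.eq_swap] at h₁ h₂
    rw [hG (fun h => hn₁ ⟨h, hy₁⟩) hy₁ hy₂ h₁ h₂]
  · rw [hG (fun h => hn₁ ⟨hx₁, h⟩) hx₁ hx₂ h₁ h₂]
  · exact absurd ⟨hx₁, hy₁⟩ hn₁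

theorem ContractsSimply.injOn_map (hG : G.ContractsSimply S) (hv₀ : v₀ ∈ S) (c : Col) :
    Set.InjOn (Sym2.map (contractMap S v₀)) ↑((G.edges c).filter (· ∉ S.sym2)) := by
  intro e₁ he₁ e₂ he₂ heq
  rw [Finset.mem_coe, Finset.mem_filter] at he₁ he₂
  induction e₁ using Sym2.ind with | _ x₁ y₁ => ?_
  induction e₂ using Sym2.ind with | _ x₂ y₂ => ?_
  have hn₁ : ¬(x₁ ∈ S ∧ y₁ ∈ S) := Finset.mk_mem_sym2_iff.not.1 he₁.2
  rw [Sym2.map_mk, Sym2.map_mk, Sym2.eq_iff] at heq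
  rcases heq with ⟨hx, hy⟩ | ⟨hx, hy⟩
  · exact hG.eq_of_contractMap_eq hv₀ he₁.1 he₂.1 hn₁ hx hy
  · exact (hG.eq_of_contractMap_eq hv₀ he₁.1 (Sym2.eq_swap ▸ he₂.1) hn₁ hx hy).trans
      Sym2.eq_swap

theorem edgeCount_contract_add_edgeCount_inducedOn (hG : G.ContractsSimply S) (hv₀ : v₀ ∈ S) :
    (G.contract S v₀ hv₀).edgeCount + (G.inducedOn S).edgeCount = G.edgeCount := by
  have hsplit (c : Col) :
      ((G.contract S v₀ hv₀).edges c).card + ((G.inducedOn S).edges c).card =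
        (G.edges c).card := by
    rw [contract, Finset.card_image_of_injOn (hG.injOn_map hv₀ c), add_comm]
    exact Finset.card_filter_add_card_filter_not _
  have := hsplit Col.b
  have := hsplit Col.r
  simp only [edgeCount]
  omega

theorem card_verts_contract_add_card (hS : S ⊆ G.verts) (hv₀ : v₀ ∈ S) :
    (G.contract S v₀ hv₀).verts.card + S.card = G.verts.card + 1 := by
  have hv₀' : v₀ ∉ G.verts \ S := fun h => (Finset.mem_sdiff.1 h).2 hv₀
  rw [contract, Finset.card_insert_of_notMem hv₀', add_right_comm,
    Finset.card_sdiff_add_card_eq_card hS]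

theorem isSubgraph_of_isSubgraph_contract {K : BiGraph α} {hv₀ : v₀ ∈ S}
    (hK : K.IsSubgraph (G.contract S v₀ hv₀)) (hv₀K : v₀ ∉ K.verts) : K.IsSubgraph G := by
  refine ⟨fun x hx => ?_, fun c e he => ?_⟩
  · rcases Finset.mem_insert.1 (hK.1 hx) with rfl | hx'
    · exact absurd hx hv₀K
    · exact (Finset.mem_sdiff.1 hx').1
  · obtain ⟨e', he', rfl⟩ := Finset.mem_image.1 (hK.2 c he)
    have hfix : ∀ x ∈ e', contractMap S v₀ x = x := fun x hx => by
      refine if_neg fun hxS => hv₀K ((K.valid c _ he).2 v₀ (Sym2.mem_map.2 ⟨x, hx, ?_⟩))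
      exact if_pos hxS
    rw [Sym2.map_congr hfix, Sym2.map_id', id]
    exact (Finset.mem_filter.1 he').1

def uncontract (G K : BiGraph α) (S : Finset α) (v₀ : α) : BiGraph α where
  verts := K.verts ∪ S
  edges c := (G.inducedOn S).edges c ∪
    (G.edges c).filter (fun e => e ∉ S.sym2 ∧ Sym2.map (contractMap S v₀) e ∈ K.edges c)
  valid c e he := by
    rcases Finset.mem_union.1 he with he | he
    · obtain ⟨hdiag, hverts⟩ := (G.inducedOn S).valid c e he
      exact ⟨hdiag, fun x hx => Finset.mem_union_right _ (hverts x hx)⟩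
    · obtain ⟨heG, -, heK⟩ := Finset.mem_filter.1 he
      refine ⟨(G.valid c e heG).1, fun x hx => ?_⟩
      by_cases hxS : x ∈ S
      · exact Finset.mem_union_right _ hxS
      · have hfx : contractMap S v₀ x = x := if_neg hxS
        exact Finset.mem_union_left _
          ((K.valid c _ heK).2 x (Sym2.mem_map.2 ⟨x, hx, hfx⟩))

variable {K : BiGraph α} {hv₀ : v₀ ∈ S}

theorem uncontract_isSubgraph (hS : S ⊆ G.verts) (hK : K.IsSubgraph (G.contract S v₀ hv₀)) :
    (G.uncontract K S v₀).IsSubgraph G := by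
  refine ⟨Finset.union_subset (fun x hx => ?_) hS,
    fun c => Finset.union_subset (Finset.filter_subset _ _) (Finset.filter_subset _ _)⟩
  rcases Finset.mem_insert.1 (hK.1 hx) with rfl | hx'
  · exact hS hv₀
  · exact (Finset.mem_sdiff.1 hx').1

theorem card_verts_uncontract_add_one (hK : K.IsSubgraph (G.contract S v₀ hv₀))
    (hv₀K : v₀ ∈ K.verts) :
    (G.uncontract K S v₀).verts.card + 1 = K.verts.card + S.card := by
  have hinter : K.verts ∩ S = {v₀} := by
    refine Finset.eq_singleton_iff_unique_mem.2 ⟨Finset.mem_inter.2 ⟨hv₀K, hv₀⟩, fun x hx => ?_⟩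
    obtain ⟨hxK, hxS⟩ := Finset.mem_inter.1 hx
    rcases Finset.mem_insert.1 (hK.1 hxK) with rfl | hx'
    · rfl
    · exact absurd hxS (Finset.mem_sdiff.1 hx').2
  rw [← Finset.card_union_add_card_inter, hinter, Finset.card_singleton]
  rfl

theorem edgeCount_uncontract (hG : G.ContractsSimply S)
    (hK : K.IsSubgraph (G.contract S v₀ hv₀)) :
    (G.uncontract K S v₀).edgeCount = (G.inducedOn S).edgeCount + K.edgeCount := by
  have hsplit (c : Col) :
      ((G.uncontract K S v₀).edges c).card = ((G.inducedOn S).edges c).card + (K.edges c).card := by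
    have hdisj : Disjoint ((G.inducedOn S).edges c)
        ((G.edges c).filter (fun e => e ∉ S.sym2 ∧ Sym2.map (contractMap S v₀) e ∈ K.edges c)) :=
      Finset.disjoint_filter.2 fun _ _ hS hnS => hnS.1 hS
    rw [uncontract, Finset.card_union_of_disjoint hdisj, ← Finset.filter_filter,
      Finset.card_filter_apply_mem_of_injOn (hG.injOn_map hv₀ c) (hK.2 c)]
  have := hsplit Col.b
  have := hsplit Col.r
  simp only [edgeCount]
  omega

theorem Sparse.contract (hG : G.Sparse 2) (hS : S ⊆ G.verts)
    (hI : ((G.inducedOn S).edgeCount : ℤ) = 2 * S.card - 2) (hsimple : G.ContractsSimply S)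
    (hv₀ : v₀ ∈ S) : (G.contract S v₀ hv₀).Sparse 2 := by
  intro K hK hKpos
  by_cases hv₀K : v₀ ∈ K.verts
  · have hE := edgeCount_uncontract hsimple hK
    have hV := card_verts_uncontract_add_one hK hv₀K
    have := hG _ (uncontract_isSubgraph hS hK) (by omega)
    omega
  · exact hG K (isSubgraph_of_isSubgraph_contract hK hv₀K) hKpos

theorem Tight.contract (hG : G.Tight 2) (hS : S ⊆ G.verts)
    (hI : ((G.inducedOn S).edgeCount : ℤ) = 2 * S.card - 2) (hsimple : G.ContractsSimply S)
    (hv₀ : v₀ ∈ S) : (G.contract S v₀ hv₀).Tight 2 := by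
  refine ⟨hG.1.contract hS hI hsimple hv₀, ?_⟩
  have hE := edgeCount_contract_add_edgeCount_inducedOn hsimple hv₀
  have hV := card_verts_contract_add_card hS hv₀
  have := hG.2
  omega

end Contraction

end BiGraph

/-- If `G` is `(2,2)`-tight, `H` is a proper subgraph with `f(H) = 2`,
and no vertex outside `H` has two same-coloured edges to two vertices of `H`, then the
contraction `G/H` exists as a bi-coloured multigraph (with simple monochrome
subgraphs) and is `(2,2)`-tight. -/
theorem contraction_of_tight_subgraph_tight
    {α : Type} [DecidableEq α] (G H : BiGraph α)
    (hG : G.Tight 2) (hsub : H.ProperSubgraph G) (hf : H.fcount = 2)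
    (hno : ¬ ∃ (u a b : α) (c : Col), u ∈ G.verts ∧ u ∉ H.verts ∧
      a ∈ H.verts ∧ b ∈ H.verts ∧ a ≠ b ∧ s(a, u) ∈ G.edges c ∧ s(b, u) ∈ G.edges c) :
    ∀ v₀ ∈ H.verts, ∃ G' : BiGraph α,
      G'.verts = insert v₀ (G.verts \ H.verts) ∧
      (∀ d, G'.edges d = ((G.edges d).filter (fun e => e ∉ H.verts.sym2)).image
        (Sym2.map (fun u => if u ∈ H.verts then v₀ else u))) ∧
      G'.Tight 2 := by
  intro v₀ hv₀
  have hsimple : G.ContractsSimply H.verts := fun u a b c hu ha hb hau hbu => by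
    by_contra hab
    exact hno ⟨u, a, b, c, (G.valid c _ hau).2 u (Sym2.mem_mk_right a u), hu, ha, hb, hab, hau, hbu⟩
  have hI := hG.1.edgeCount_inducedOn hsub.1 (by unfold BiGraph.fcount at hf; omega)
  exact ⟨G.contract H.verts v₀ hv₀, rfl, fun _ => rfl, hG.contract hsub.1.1 hI hsimple hv₀⟩
end
end

section
/- Let G = (V,E) be a bi-coloured multigraph which is (2,2)-tight, and suppose x, y, z induce a subgraph isomorphic to K₃ with coloured edges (xy,c), (xz,c), (yz,c) all of the same colour c. If there is no vertex a in V \ {x,y,z} with two edges of the same colour to {x,y,z}, and there is no subgraph Y of G with f(Y) = 2 containing x and y but not z, then the bi-coloured multigraph obtained by the edge contraction of (xy,c) is (2,2)-tight with simple monochrome subgraphs. -/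
open scoped BigOperators

noncomputable section

/-!
Merging `y` into `x` maps the edges of `G` other than `(xy,c)` injectively onto the edges
of the contraction, except that `(xz,c)` and `(yz,c)` collapse to one edge: any other
collision would be a vertex with two edges of one colour to `{x, y}`. So the contraction
has one vertex and two edges fewer than `G`.

For sparsity it suffices to bound subgraphs induced on a vertex set `W`. If `x ∉ W` such a
subgraph is already a subgraph of `G`. If `x ∈ W`, compare it with the subgraph `L` of `G`
induced on `W ∪ {y}`, which has one more vertex and one more edge (`xy`), plus the collapsed
edge `yz` when `z ∈ W`. When `z ∉ W` the missing unit comes instead from `f(L) ≠ 2`, which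
together with the `(2,2)`-sparsity of `G` gives `f(L) ≥ 3`.
-/

theorem Finset.card_image_add_ite_eq_card {β γ : Type*} [DecidableEq β] [DecidableEq γ]
    {f : β → γ} {T : Finset β} {a b : β} (hab : a ≠ b) (hf : f a = f b)
    (hinj : ∀ p ∈ T, ∀ q ∈ T, f p = f q → p = q ∨ (p = a ∧ q = b) ∨ (p = b ∧ q = a)) :
    (T.image f).card + (if a ∈ T ∧ b ∈ T then 1 else 0) = T.card := by
  split_ifs with hT
  · obtain ⟨ha, hb⟩ := hT
    have himage : T.image f = (T.erase b).image f := by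
      rw [← Finset.insert_erase hb, Finset.image_insert, Finset.erase_insert_eq_erase,
        Finset.erase_eq_of_notMem (Finset.notMem_erase b T), ← hf,
        Finset.insert_eq_of_mem (Finset.mem_image_of_mem f (Finset.mem_erase.mpr ⟨hab, ha⟩))]
    rw [himage, Finset.card_image_of_injOn, Finset.card_erase_add_one hb]
    intro p hp q hq hpq
    have hp' := Finset.mem_erase.mp hp
    have hq' := Finset.mem_erase.mp hq
    grind
  · rw [add_zero, Finset.card_image_of_injOn]
    intro p hp q hq hpq
    grind

namespace BiGraph

variable {α : Type} [DecidableEq α]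

@[ext]
theorem ext {G H : BiGraph α} (hv : G.verts = H.verts) (he : G.edges = H.edges) : G = H := by
  cases G; cases H; cases hv; cases he; rfl

def induce (G : BiGraph α) (W : Finset α) : BiGraph α where
  verts := W
  edges d := (G.edges d).filter (· ∈ W.sym2)
  valid d e he :=
    ⟨(G.valid d e (Finset.mem_filter.mp he).1).1,
      Finset.mem_sym2_iff.mp (Finset.mem_filter.mp he).2⟩

theorem induce_isSubgraph {G : BiGraph α} {W : Finset α} (hW : W ⊆ G.verts) :
    (G.induce W).IsSubgraph G :=
  ⟨hW, fun _ => Finset.filter_subset _ _⟩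

theorem induce_verts (G : BiGraph α) : G.induce G.verts = G := by
  ext1
  · rfl
  · funext d
    exact Finset.filter_true_of_mem fun e he => Finset.mem_sym2_iff.mpr (G.valid d e he).2

theorem IsSubgraph.edgeCount_le_induce {H G : BiGraph α} (h : H.IsSubgraph G) :
    H.edgeCount ≤ (G.induce H.verts).edgeCount := by
  have hsub : ∀ d, H.edges d ⊆ (G.induce H.verts).edges d := fun d e he =>
    Finset.mem_filter.mpr ⟨h.2 d he, Finset.mem_sym2_iff.mpr (H.valid d e he).2⟩
  exact Nat.add_le_add (Finset.card_le_card (hsub _)) (Finset.card_le_card (hsub _))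

theorem sparse_of_induce {G : BiGraph α} {k : ℤ}
    (h : ∀ W ⊆ G.verts, 0 < (G.induce W).edgeCount →
      ((G.induce W).edgeCount : ℤ) ≤ 2 * W.card - k) :
    G.Sparse k := by
  intro H hH hpos
  have hle := hH.edgeCount_le_induce
  have := h H.verts hH.1 (hpos.trans_le hle)
  omega

theorem induce_deleteEdge (G : BiGraph α) (c : Col) (e : Sym2 α) (W : Finset α) :
    (G.deleteEdge c e).induce W = (G.induce W).deleteEdge c e := by
  ext1
  · rfl
  · funext d
    by_cases hd : d = c <;> simp [induce, deleteEdge, hd, Finset.filter_erase]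

theorem edgeCount_deleteEdge_add_one {G : BiGraph α} {c : Col} {e : Sym2 α}
    (he : e ∈ G.edges c) : (G.deleteEdge c e).edgeCount + 1 = G.edgeCount := by
  have := Finset.card_erase_add_one he
  cases c <;> simp [edgeCount, deleteEdge] <;> omega

theorem edgeCount_pos_of_mem {G : BiGraph α} {c : Col} {e : Sym2 α} (he : e ∈ G.edges c) :
    0 < G.edgeCount := by
  have := Finset.card_pos.mpr ⟨e, he⟩
  cases c <;> simp only [edgeCount] <;> omega

theorem IsSubgraph.trans {K H G : BiGraph α} (hKH : K.IsSubgraph H) (hHG : H.IsSubgraph G) :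
    K.IsSubgraph G :=
  ⟨hKH.1.trans hHG.1, fun d => (hKH.2 d).trans (hHG.2 d)⟩

theorem deleteEdge_isSubgraph (G : BiGraph α) (c : Col) (e : Sym2 α) :
    (G.deleteEdge c e).IsSubgraph G := by
  refine ⟨subset_rfl, fun d => ?_⟩
  by_cases hd : d = c
  · simp only [deleteEdge, if_pos hd]; exact Finset.erase_subset _ _
  · simp only [deleteEdge, if_neg hd]; exact subset_rfl

theorem mem_deleteEdge_edges {G : BiGraph α} {c d : Col} {e₀ e : Sym2 α} (he : e ≠ e₀) :
    e ∈ (G.deleteEdge c e₀).edges d ↔ e ∈ G.edges d := by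
  by_cases hd : d = c <;> simp [deleteEdge, hd, he]

theorem notMem_deleteEdge_edges {G : BiGraph α} {c : Col} {e : Sym2 α}
    (hcol : ∀ d, e ∈ G.edges d → d = c) (d : Col) : e ∉ (G.deleteEdge c e).edges d := by
  by_cases hd : d = c
  · simp [deleteEdge, hd]
  · simpa [deleteEdge, hd] using mt (hcol d) hd

def identifyMap (x y : α) : α → α := fun u => if u = y then x else u

theorem identifyMap_ne {x y : α} (hxy : x ≠ y) (u : α) : identifyMap x y u ≠ y := by
  unfold identifyMap; split_ifs with h <;> assumption

theorem identifyMap_mem {x y : α} {W : Finset α} (hx : x ∈ W) {u : α} (hu : u ∈ W) :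
    identifyMap x y u ∈ W := by
  unfold identifyMap; split_ifs <;> assumption

theorem identifyMap_mem_iff_of_mem {x y u : α} {W : Finset α} (hx : x ∈ W) :
    identifyMap x y u ∈ W ↔ u ∈ insert y W := by
  unfold identifyMap; split_ifs with h <;> simp [h, hx]

theorem identifyMap_mem_iff_of_notMem {x y u : α} {W : Finset α} (hx : x ∉ W) (hy : y ∉ W) :
    identifyMap x y u ∈ W ↔ u ∈ W := by
  unfold identifyMap; split_ifs with h <;> simp [h, hx, hy]

theorem eq_or_of_map_identifyMap_eq {x y : α} {e₁ e₂ : Sym2 α}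
    (h₁ : ¬ e₁.IsDiag) (h₂ : ¬ e₂.IsDiag) (hxy₁ : e₁ ≠ s(x, y)) (hxy₂ : e₂ ≠ s(x, y))
    (h : e₁.map (identifyMap x y) = e₂.map (identifyMap x y)) :
    e₁ = e₂ ∨ ∃ w, (e₁ = s(x, w) ∧ e₂ = s(y, w)) ∨ (e₁ = s(y, w) ∧ e₂ = s(x, w)) := by
  induction e₁ using Sym2.ind with | _ a b =>
  induction e₂ using Sym2.ind with | _ u v =>
  simp only [Sym2.map_mk, identifyMap, Sym2.mk_isDiag_iff, ne_eq, Sym2.eq_iff] at *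
  split_ifs at h <;>
    first
    | (left; grind)
    | (right; exact ⟨a, by grind⟩)
    | (right; exact ⟨b, by grind⟩)
    | (right; exact ⟨u, by grind⟩)
    | (right; exact ⟨v, by grind⟩)

theorem map_identifyMap_not_isDiag {x y : α} {e : Sym2 α} (he : ¬ e.IsDiag)
    (hxy : e ≠ s(x, y)) : ¬ (e.map (identifyMap x y)).IsDiag := by
  induction e using Sym2.ind with | _ a b =>
  simp only [Sym2.map_mk, identifyMap, Sym2.mk_isDiag_iff, ne_eq, Sym2.eq_iff] at *
  split_ifs <;> grind

def identify (G : BiGraph α) (x y : α) (hx : x ∈ G.verts) (hxy : x ≠ y)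
    (hadj : ∀ d, s(x, y) ∉ G.edges d) : BiGraph α where
  verts := G.verts.erase y
  edges d := (G.edges d).image (Sym2.map (identifyMap x y))
  valid d e' he' := by
    obtain ⟨e, he, rfl⟩ := Finset.mem_image.mp he'
    refine ⟨map_identifyMap_not_isDiag (G.valid d e he).1 (ne_of_mem_of_not_mem he (hadj d)),
      fun v hv => ?_⟩
    obtain ⟨u, hu, rfl⟩ := Sym2.mem_map.mp hv
    exact Finset.mem_erase.mpr ⟨identifyMap_ne hxy u, identifyMap_mem hx ((G.valid d e he).2 u hu)⟩

theorem identify_induce_edges {G : BiGraph α} {x y : α} {hx : x ∈ G.verts} {hxy : x ≠ y}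
    {hadj : ∀ d, s(x, y) ∉ G.edges d} {W W₀ : Finset α}
    (hW : ∀ u, identifyMap x y u ∈ W ↔ u ∈ W₀) (d : Col) :
    ((G.identify x y hx hxy hadj).induce W).edges d =
      ((G.induce W₀).edges d).image (Sym2.map (identifyMap x y)) := by
  simp only [induce, identify, Finset.filter_image]
  congr 1
  refine Finset.filter_congr fun e _ => ?_
  simp [Finset.mem_sym2_iff, Sym2.mem_map, hW]

theorem edgeCount_identify_induce_le {G : BiGraph α} {x y : α} {hx : x ∈ G.verts} {hxy : x ≠ y}
    {hadj : ∀ d, s(x, y) ∉ G.edges d} {W W₀ : Finset α}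
    (hW : ∀ u, identifyMap x y u ∈ W ↔ u ∈ W₀) :
    ((G.identify x y hx hxy hadj).induce W).edgeCount ≤ (G.induce W₀).edgeCount := by
  simp only [edgeCount, identify_induce_edges hW]
  exact Nat.add_le_add Finset.card_image_le Finset.card_image_le

-- The parallel pair coming from `(xz,c)` and `(yz,c)` merges since a colour class is a `Finset`.
def contractEdge (G : BiGraph α) (c : Col) (x y : α) (hx : x ∈ G.verts) (hxy : x ≠ y)
    (hcol : ∀ d, s(x, y) ∈ G.edges d → d = c) : BiGraph α :=
  (G.deleteEdge c s(x, y)).identify x y hx hxy (notMem_deleteEdge_edges hcol)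

theorem common_neighbor_eq_of_card_filter_le_one {G : BiGraph α} {x y z : α} (hxy : x ≠ y)
    (hno : ∀ a ∈ G.verts, a ∉ ({x, y, z} : Finset α) →
      ∀ d : Col, (({x, y, z} : Finset α).filter (fun w => s(a, w) ∈ G.edges d)).card ≤ 1)
    {d : Col} {w : α} (hx : s(x, w) ∈ G.edges d) (hy : s(y, w) ∈ G.edges d) : w = z := by
  by_contra hwz
  have hwx : w ≠ x := fun h => (G.valid d _ hx).1 (Sym2.mk_isDiag_iff.mpr h.symm)
  have hwy : w ≠ y := fun h => (G.valid d _ hy).1 (Sym2.mk_isDiag_iff.mpr h.symm)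
  have hwV : w ∈ G.verts := (G.valid d _ hx).2 w (Sym2.mem_mk_right x w)
  have htwo : 1 < (({x, y, z} : Finset α).filter (fun v => s(w, v) ∈ G.edges d)).card :=
    Finset.one_lt_card.mpr ⟨x, by simp [Sym2.eq_swap, hx], y, by simp [Sym2.eq_swap, hy], hxy⟩
  exact (hno w hwV (by simp [hwx, hwy, hwz]) d).not_gt htwo

section Triangle

variable {G : BiGraph α} {c : Col} {x y z : α}

theorem eq_or_of_map_identifyMap_eq_of_common {d : Col}
    (hcommon : ∀ w, s(x, w) ∈ G.edges d → s(y, w) ∈ G.edges d → w = z)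
    {e₁ e₂ : Sym2 α} (h₁ : e₁ ∈ G.edges d) (h₂ : e₂ ∈ G.edges d)
    (hxy₁ : e₁ ≠ s(x, y)) (hxy₂ : e₂ ≠ s(x, y))
    (h : e₁.map (identifyMap x y) = e₂.map (identifyMap x y)) :
    e₁ = e₂ ∨ (e₁ = s(x, z) ∧ e₂ = s(y, z)) ∨ (e₁ = s(y, z) ∧ e₂ = s(x, z)) := by
  rcases eq_or_of_map_identifyMap_eq (G.valid d _ h₁).1 (G.valid d _ h₂).1 hxy₁ hxy₂ h with
    h | ⟨w, ⟨rfl, rfl⟩ | ⟨rfl, rfl⟩⟩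
  · exact Or.inl h
  · obtain rfl := hcommon w h₁ h₂
    exact Or.inr (Or.inl ⟨rfl, rfl⟩)
  · obtain rfl := hcommon w h₂ h₁
    exact Or.inr (Or.inr ⟨rfl, rfl⟩)

theorem card_image_identifyMap_add_ite {d : Col} (hxy : x ≠ y)
    (hcommon : ∀ w, s(x, w) ∈ G.edges d → s(y, w) ∈ G.edges d → w = z)
    {T : Finset (Sym2 α)} (hT : T ⊆ G.edges d) (hxyT : s(x, y) ∉ T) :
    (T.image (Sym2.map (identifyMap x y))).card +
      (if s(x, z) ∈ T ∧ s(y, z) ∈ T then 1 else 0) = T.card :=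
  Finset.card_image_add_ite_eq_card (by grind [Sym2.eq_iff]) (by simp [identifyMap, hxy])
    fun _ hp _ hq hpq => eq_or_of_map_identifyMap_eq_of_common hcommon (hT hp) (hT hq)
      (ne_of_mem_of_not_mem hp hxyT) (ne_of_mem_of_not_mem hq hxyT) hpq

variable {hx : x ∈ G.verts} {hxy : x ≠ y} {hcol : ∀ d, s(x, y) ∈ G.edges d → d = c}

theorem edgeCount_contractEdge_induce (hxz : x ≠ z) (hyz : y ≠ z)
    (hexy : s(x, y) ∈ G.edges c) (hexz : s(x, z) ∈ G.edges c) (heyz : s(y, z) ∈ G.edges c)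
    (hxz_col : ∀ d, s(x, z) ∈ G.edges d → d = c)
    (hcommon : ∀ d w, s(x, w) ∈ G.edges d → s(y, w) ∈ G.edges d → w = z)
    {W : Finset α} (hxW : x ∈ W) :
    ((G.contractEdge c x y hx hxy hcol).induce W).edgeCount + (if z ∈ W then 2 else 1) =
      (G.induce (insert y W)).edgeCount := by
  set H := G.deleteEdge c s(x, y)
  set T := (H.induce (insert y W)).edges
  have hT : ∀ d, T d ⊆ G.edges d := fun d =>
    (Finset.filter_subset _ _).trans ((deleteEdge_isSubgraph G c _).2 d)
  have hxz_xy : s(x, z) ≠ s(x, y) := by simp [hxy, hyz.symm]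
  have hyz_xy : s(y, z) ≠ s(x, y) := by simp [hxz.symm, hxy.symm]
  have hcard := fun d => card_image_identifyMap_add_ite hxy (hcommon d) (hT d)
    fun h => notMem_deleteEdge_edges hcol d (Finset.mem_filter.mp h).1
  have hpair : ∀ d, (s(x, z) ∈ T d ∧ s(y, z) ∈ T d) ↔ (d = c ∧ z ∈ W) := by
    intro d
    simp only [T, H, induce, Finset.mem_filter, mem_deleteEdge_edges hxz_xy,
      mem_deleteEdge_edges hyz_xy, Finset.mem_sym2_iff, Sym2.forall_mem_pair,
      Finset.mem_insert, hyz.symm, false_or]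
    constructor
    · rintro ⟨⟨hd, -, hz⟩, -⟩
      exact ⟨hxz_col d hd, hz⟩
    · rintro ⟨rfl, hz⟩
      exact ⟨⟨hexz, by simp [hxW], hz⟩, ⟨heyz, by simp, hz⟩⟩
  have hdel : (T Col.b).card + (T Col.r).card + 1 = (G.induce (insert y W)).edgeCount := by
    simp only [T, H, induce_deleteEdge]
    refine edgeCount_deleteEdge_add_one (Finset.mem_filter.mpr ⟨hexy, ?_⟩)
    simp [Finset.mem_sym2_iff, hxW]
  have hedges : ∀ d, ((G.contractEdge c x y hx hxy hcol).induce W).edges d =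
      (T d).image (Sym2.map (identifyMap x y)) :=
    identify_induce_edges fun _ => identifyMap_mem_iff_of_mem hxW
  have hcolours : ((if Col.b = c ∧ z ∈ W then 1 else 0) + if Col.r = c ∧ z ∈ W then 1 else 0) =
      if z ∈ W then 1 else 0 := by
    cases c <;> simp
  have hb := hcard Col.b
  have hr := hcard Col.r
  simp only [hpair] at hb hr
  rw [← hdel]
  simp only [edgeCount, hedges]
  split_ifs at hb hr hcolours ⊢ <;> omega

theorem sparse_contractEdge (hG : G.Sparse 2) (hxz : x ≠ z) (hyz : y ≠ z)
    (hexy : s(x, y) ∈ G.edges c) (hexz : s(x, z) ∈ G.edges c) (heyz : s(y, z) ∈ G.edges c)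
    (hxz_col : ∀ d, s(x, z) ∈ G.edges d → d = c)
    (hcommon : ∀ d w, s(x, w) ∈ G.edges d → s(y, w) ∈ G.edges d → w = z)
    (hY : ¬ ∃ Y : BiGraph α, Y.IsSubgraph G ∧ Y.fcount = 2 ∧
      x ∈ Y.verts ∧ y ∈ Y.verts ∧ z ∉ Y.verts) :
    (G.contractEdge c x y hx hxy hcol).Sparse 2 := by
  have hyV : y ∈ G.verts := (G.valid c _ hexy).2 y (Sym2.mem_mk_right x y)
  refine sparse_of_induce fun W hW hpos => ?_
  have hyW : y ∉ W := fun h => (Finset.mem_erase.mp (hW h)).1 rfl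
  have hWV : W ⊆ G.verts := hW.trans (Finset.erase_subset _ _)
  by_cases hxW : x ∈ W
  · have hcount := edgeCount_contractEdge_induce (hx := hx) (hxy := hxy) (hcol := hcol)
      hxz hyz hexy hexz heyz hxz_col hcommon hxW
    set L := G.induce (insert y W)
    have hL : L.IsSubgraph G := induce_isSubgraph (Finset.insert_subset hyV hWV)
    have hLcard : L.verts.card = W.card + 1 := Finset.card_insert_of_notMem hyW
    have hLsparse := hG L hL (edgeCount_pos_of_mem (c := c) (e := s(x, y))
      (Finset.mem_filter.mpr ⟨hexy, by simp [Finset.mem_sym2_iff, hxW]⟩))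
    split_ifs at hcount with hzW
    · omega
    · have hLf : L.fcount ≠ 2 := fun hf => hY ⟨L, hL, hf, Finset.mem_insert_of_mem hxW,
        Finset.mem_insert_self y W, fun hz => hzW ((Finset.mem_insert.mp hz).resolve_left hyz.symm)⟩
      unfold fcount at hLf
      omega
  · have hle := edgeCount_identify_induce_le (G := G.deleteEdge c s(x, y)) (hx := hx) (hxy := hxy)
      (hadj := notMem_deleteEdge_edges hcol) fun _ => identifyMap_mem_iff_of_notMem hxW hyW
    have hsub : ((G.deleteEdge c s(x, y)).induce W).IsSubgraph G :=
      (induce_isSubgraph (G := G.deleteEdge c s(x, y)) hWV).trans (deleteEdge_isSubgraph G c _)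
    calc (((G.contractEdge c x y hx hxy hcol).induce W).edgeCount : ℤ)
        ≤ ((G.deleteEdge c s(x, y)).induce W).edgeCount := by exact_mod_cast hle
      _ ≤ 2 * W.card - 2 := hG _ hsub (hpos.trans_le hle)

theorem edgeCount_contractEdge_add_two (hxz : x ≠ z) (hyz : y ≠ z)
    (hexy : s(x, y) ∈ G.edges c) (hexz : s(x, z) ∈ G.edges c) (heyz : s(y, z) ∈ G.edges c)
    (hxz_col : ∀ d, s(x, z) ∈ G.edges d → d = c)
    (hcommon : ∀ d w, s(x, w) ∈ G.edges d → s(y, w) ∈ G.edges d → w = z) :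
    (G.contractEdge c x y hx hxy hcol).edgeCount + 2 = G.edgeCount := by
  have hyV : y ∈ G.verts := (G.valid c _ hexy).2 y (Sym2.mem_mk_right x y)
  have hzV : z ∈ G.verts := (G.valid c _ hexz).2 z (Sym2.mem_mk_right x z)
  have h := edgeCount_contractEdge_induce (hx := hx) (hxy := hxy) (hcol := hcol)
    hxz hyz hexy hexz heyz hxz_col hcommon (Finset.mem_erase.mpr ⟨hxy, hx⟩)
  rwa [if_pos (Finset.mem_erase.mpr ⟨hyz.symm, hzV⟩), Finset.insert_erase hyV, induce_verts,
    show G.verts.erase y = (G.contractEdge c x y hx hxy hcol).verts from rfl, induce_verts] at h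

theorem tight_contractEdge (hG : G.Tight 2) (hxz : x ≠ z) (hyz : y ≠ z)
    (hexy : s(x, y) ∈ G.edges c) (hexz : s(x, z) ∈ G.edges c) (heyz : s(y, z) ∈ G.edges c)
    (hxz_col : ∀ d, s(x, z) ∈ G.edges d → d = c)
    (hcommon : ∀ d w, s(x, w) ∈ G.edges d → s(y, w) ∈ G.edges d → w = z)
    (hY : ¬ ∃ Y : BiGraph α, Y.IsSubgraph G ∧ Y.fcount = 2 ∧
      x ∈ Y.verts ∧ y ∈ Y.verts ∧ z ∉ Y.verts) :
    (G.contractEdge c x y hx hxy hcol).Tight 2 := by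
  have hyV : y ∈ G.verts := (G.valid c _ hexy).2 y (Sym2.mem_mk_right x y)
  refine ⟨sparse_contractEdge hG.1 hxz hyz hexy hexz heyz hxz_col hcommon hY, ?_⟩
  have hcount := edgeCount_contractEdge_add_two (hx := hx) (hxy := hxy) (hcol := hcol)
    hxz hyz hexy hexz heyz hxz_col hcommon
  have hcard := Finset.card_erase_add_one hyV
  have := hG.2
  change ((G.contractEdge c x y hx hxy hcol).edgeCount : ℤ) = 2 * ((G.verts.erase y).card : ℤ) - 2
  omega

end Triangle

end BiGraph

/-- If `G` is `(2,2)`-tight, the vertices `x, y, z` induce a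
monochrome triangle of colour `c`, no outside vertex has two same-coloured edges to
`{x, y, z}`, and no subgraph `Y` with `f(Y) = 2` contains `x, y` but not `z`, then the
edge contraction of `(xy, c)` exists as a bi-coloured multigraph (with simple
monochrome subgraphs) and is `(2,2)`-tight. -/
theorem triangle_edge_contraction_tight
    {α : Type} [DecidableEq α] (G : BiGraph α) (c : Col) (x y z : α)
    (hG : G.Tight 2)
    (hxy : x ≠ y) (hxz : x ≠ z) (hyz : y ≠ z)
    (hexy : s(x, y) ∈ G.edges c) (hexz : s(x, z) ∈ G.edges c)
    (heyz : s(y, z) ∈ G.edges c)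
    (hinduced : ∀ (d : Col) (u w : α), u ∈ ({x, y, z} : Finset α) →
      w ∈ ({x, y, z} : Finset α) → s(u, w) ∈ G.edges d →
      d = c ∧ (s(u, w) = s(x, y) ∨ s(u, w) = s(x, z) ∨ s(u, w) = s(y, z)))
    (hno : ∀ a ∈ G.verts, a ∉ ({x, y, z} : Finset α) →
      ∀ d : Col, (({x, y, z} : Finset α).filter (fun w => s(a, w) ∈ G.edges d)).card ≤ 1)
    (hY : ¬ ∃ Y : BiGraph α, Y.IsSubgraph G ∧ Y.fcount = 2 ∧
      x ∈ Y.verts ∧ y ∈ Y.verts ∧ z ∉ Y.verts) :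
    ∃ G' : BiGraph α,
      G'.verts = G.verts.erase y ∧
      (∀ d, G'.edges d = ((if d = c then (G.edges d).erase s(x, y) else G.edges d)).image
        (Sym2.map (fun u => if u = y then x else u))) ∧
      G'.Tight 2 := by
  have hxV : x ∈ G.verts := (G.valid c _ hexy).2 x (Sym2.mem_mk_left x y)
  have hcol : ∀ d, s(x, y) ∈ G.edges d → d = c := fun d h =>
    (hinduced d x y (by simp) (by simp) h).1
  have hxz_col : ∀ d, s(x, z) ∈ G.edges d → d = c := fun d h =>
    (hinduced d x z (by simp) (by simp) h).1
  refine ⟨G.contractEdge c x y hxV hxy hcol, rfl, fun _ => rfl, ?_⟩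
  exact BiGraph.tight_contractEdge hG hxz hyz hexy hexz heyz hxz_col
    (fun _ _ => BiGraph.common_neighbor_eq_of_card_filter_le_one hxy hno) hY
end
end
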